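/- In the Earley algorithm, a dotted item [A → α • β] is inserted in table entry E_{i,j} if and only if (A1) S ⇒* a_1⋯a_i A γ for some γ, and (A2) α ⇒* a_{i+1}⋯a_j. -/

import Mathlib

/-! Formalization of Earley parsing and the Nederhof–Satta variant. -/

variable {T N : Type}

/-- A context-free grammar: a start nonterminal and a set of productions. -/
structure CFG (T N : Type) where
  initial : N
  rules : Set (N × List (Symbol T N))

/-- One rewriting step of the grammar. -/
def CFG.Produces (g : CFG T N) (u v : List (Symbol T N)) : Prop :=
  ∃ A α p q, (A, α) ∈ g.rules ∧ u = p ++ [Symbol.nonterminal A] ++ q ∧ v = p ++ α ++ q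

/-- The derivation relation ⇒* (reflexive-transitive closure of rewriting). -/
def CFG.Derives (g : CFG T N) : List (Symbol T N) → List (Symbol T N) → Prop :=
  Relation.ReflTransGen g.Produces

/-- The language of the grammar: { w | S ⇒* w }. -/
def CFG.language (g : CFG T N) : Set (List T) :=
  { w | g.Derives [Symbol.nonterminal g.initial] (w.map Symbol.terminal) }

/-- `inputSlice w i j` is the substring a_{i+1}⋯a_j of `w` (0-based: w[i..j)), as symbols. -/
def inputSlice (w : List T) (i j : ℕ) : List (Symbol T N) :=
  ((w.take j).drop i).map Symbol.terminal

/-- The least Earley table: `Earley g w A α β i j` means the dotted item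
[A → α • β] is inserted in E_{i,j}. -/
inductive Earley (g : CFG T N) (w : List T) :
    N → List (Symbol T N) → List (Symbol T N) → ℕ → ℕ → Prop where
  | init {α} : (g.initial, α) ∈ g.rules → Earley g w g.initial [] α 0 0
  | predict {B α A β i j γ} : Earley g w B α (Symbol.nonterminal A :: β) i j →
      (A, γ) ∈ g.rules → Earley g w A [] γ j j
  | scan {A α a β i j} : Earley g w A α (Symbol.terminal a :: β) i j →
      w[j]? = some a → Earley g w A (α ++ [Symbol.terminal a]) β i (j + 1)
  | complete {A α B β i k γ j} : Earley g w A α (Symbol.nonterminal B :: β) i k →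
      Earley g w B γ [] k j → (B, γ) ∈ g.rules →
      Earley g w A (α ++ [Symbol.nonterminal B]) β i j

mutual
  /-- Forward part of the variant: `VarU g w β j` means suffix item [β] ∈ U_j. -/
  inductive VarU (g : CFG T N) (w : List T) : List (Symbol T N) → ℕ → Prop where
    | init {α} : (g.initial, α) ∈ g.rules → VarU g w α 0
    | predict {A β j γ} : VarU g w (Symbol.nonterminal A :: β) j →
        (A, γ) ∈ g.rules → VarU g w γ j
    | scan {a β j} : VarU g w (Symbol.terminal a :: β) j → w[j]? = some a →
        VarU g w β (j + 1)
    | complete {B β k γ j} : VarU g w (Symbol.nonterminal B :: β) k → (B, γ) ∈ g.rules →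
        VarT g w γ k j → VarU g w β j

  /-- Backward part of the variant: `VarT g w β j m` means suffix item [β] ∈ T_{j,m}. -/
  inductive VarT (g : CFG T N) (w : List T) : List (Symbol T N) → ℕ → ℕ → Prop where
    | empty {m} : VarU g w [] m → VarT g w [] m m
    | scan {a β j m} : VarU g w (Symbol.terminal a :: β) j → w[j]? = some a →
        VarT g w β (j + 1) m → VarT g w (Symbol.terminal a :: β) j m
    | complete {B β k γ j m} : VarU g w (Symbol.nonterminal B :: β) k → (B, γ) ∈ g.rules →
        VarT g w γ k j → VarT g w β j m → VarT g w (Symbol.nonterminal B :: β) k m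
end

/-!
Soundness is an induction on the Earley table: every rule of the table preserves (A1) and (A2).
For completeness, derivations of terminal words are first replaced by derivation forests
(`CFG.Yields`), which can be cut along concatenations. Reading a forest for `μ` from left to right
drives the scanner and the completer, moving the dot across `μ` (`Earley.advance`). The left
context (A1) is then handled by induction on the derivation `S ⇒* x A γ`: the last rewriting step
either happens left of `A`, right of `A`, or introduces `A` itself, and in the last case the item
that predicted `A` is reached by advancing over the part of the rule before `A`.
-/

namespace CFG

variable {g : CFG T N}

theorem produces_append_left {u v : List (Symbol T N)} (h : g.Produces u v)
    (p : List (Symbol T N)) : g.Produces (p ++ u) (p ++ v) := by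
  obtain ⟨A, γ, p', q, hr, rfl, rfl⟩ := h
  exact ⟨A, γ, p ++ p', q, hr, by simp, by simp⟩

theorem produces_append_right {u v : List (Symbol T N)} (h : g.Produces u v)
    (q : List (Symbol T N)) : g.Produces (u ++ q) (v ++ q) := by
  obtain ⟨A, γ, p, q', hr, rfl, rfl⟩ := h
  exact ⟨A, γ, p, q' ++ q, hr, by simp, by simp⟩

theorem derives_append_left {u v : List (Symbol T N)} (h : g.Derives u v)
    (p : List (Symbol T N)) : g.Derives (p ++ u) (p ++ v) :=
  Relation.ReflTransGen.lift (p ++ ·) (fun _ _ h => produces_append_left h p) _ _ h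

theorem derives_append_right {u v : List (Symbol T N)} (h : g.Derives u v)
    (q : List (Symbol T N)) : g.Derives (u ++ q) (v ++ q) :=
  Relation.ReflTransGen.lift (· ++ q) (fun _ _ h => produces_append_right h q) _ _ h

theorem derives_append {u u' v v' : List (Symbol T N)} (hu : g.Derives u u')
    (hv : g.Derives v v') : g.Derives (u ++ v) (u' ++ v') :=
  (derives_append_right hu v).trans (derives_append_left hv u')

theorem derives_of_mem_rules {A : N} {γ : List (Symbol T N)} (hr : (A, γ) ∈ g.rules) :
    g.Derives [Symbol.nonterminal A] γ :=
  .single ⟨A, γ, [], [], hr, rfl, by simp⟩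

/-- Derivation forests: `g.Yields u z` says that the sentential form `u` derives the terminal
word `z`, one tree per symbol of `u`. -/
inductive Yields (g : CFG T N) : List (Symbol T N) → List T → Prop
  | nil : g.Yields [] []
  | terminal {a u z} : g.Yields u z → g.Yields (Symbol.terminal a :: u) (a :: z)
  | nonterminal {B γ u x z} : (B, γ) ∈ g.rules → g.Yields γ x → g.Yields u z →
      g.Yields (Symbol.nonterminal B :: u) (x ++ z)

namespace Yields

theorem eq_nil_of_nil {z : List T} (h : g.Yields [] z) : z = [] := by
  cases h; rfl

theorem append {u v : List (Symbol T N)} {x z : List T} (hu : g.Yields u x)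
    (hv : g.Yields v z) : g.Yields (u ++ v) (x ++ z) := by
  induction hu with
  | nil => exact hv
  | terminal _ ih => exact ih.terminal
  | nonterminal hr hγ _ _ ih => simpa using nonterminal hr hγ ih

theorem of_append {u v : List (Symbol T N)} {z : List T} (h : g.Yields (u ++ v) z) :
    ∃ x y, z = x ++ y ∧ g.Yields u x ∧ g.Yields v y := by
  induction u generalizing z with
  | nil => exact ⟨[], z, rfl, nil, h⟩
  | cons s u ih =>
    cases h with
    | terminal h =>
      obtain ⟨x, y, rfl, hx, hy⟩ := ih h
      exact ⟨_ :: x, y, rfl, hx.terminal, hy⟩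
    | nonterminal hr hγ h =>
      obtain ⟨x, y, rfl, hx, hy⟩ := ih h
      exact ⟨_ ++ x, y, by simp, nonterminal hr hγ hx, hy⟩

theorem map_terminal (z : List T) : g.Yields (z.map Symbol.terminal) z := by
  induction z with
  | nil => exact nil
  | cons a z ih => exact ih.terminal

theorem of_produces {u v : List (Symbol T N)} {z : List T} (huv : g.Produces u v)
    (hv : g.Yields v z) : g.Yields u z := by
  obtain ⟨C, γ, p, q, hr, rfl, rfl⟩ := huv
  obtain ⟨xγ, y, rfl, hγ, hy⟩ := of_append hv
  obtain ⟨x, y', rfl, hx, hy'⟩ := of_append hγ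
  simpa using hx.append (nonterminal hr hy' hy)

theorem of_derives {u : List (Symbol T N)} {z : List T}
    (h : g.Derives u (z.map Symbol.terminal)) : g.Yields u z := by
  induction h using Relation.ReflTransGen.head_induction_on with
  | refl => exact map_terminal z
  | head huv _ ih => exact of_produces huv ih

end Yields

end CFG

namespace List

variable {α : Type*}

theorem append_eq_append_cons {u v x γ : List α} {a : α} (h : u ++ v = x ++ a :: γ) :
    (∃ u', u = x ++ a :: u') ∨ ∃ v', x = u ++ v' ∧ v = v' ++ a :: γ := by
  rcases append_eq_append_iff.mp h with ⟨v', rfl, rfl⟩ | ⟨u', rfl, h'⟩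
  · exact .inr ⟨v', rfl, rfl⟩
  · rcases cons_eq_append_iff.mp h' with ⟨rfl, rfl⟩ | ⟨u'', rfl, rfl⟩
    · exact .inr ⟨[], by simp, rfl⟩
    · exact .inl ⟨u'', rfl⟩

theorem prefix_drop_length_of_append_prefix {x y l : List α} (h : x ++ y <+: l) :
    y <+: l.drop x.length := by
  obtain ⟨t, rfl⟩ := h
  simp

theorem getElem?_eq_some_of_cons_prefix_drop {a : α} {y l : List α} {j : ℕ}
    (h : a :: y <+: l.drop j) : l[j]? = some a := by
  obtain ⟨t, ht⟩ := h
  simpa using (congrArg head? ht).symm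

end List

section InputSlice

variable {w : List T} {i j k : ℕ}

theorem inputSlice_self : inputSlice (N := N) w i i = [] := by
  simp [inputSlice]

theorem take_append_inputSlice (hij : i ≤ j) :
    (w.take i).map Symbol.terminal ++ inputSlice (N := N) w i j =
      (w.take j).map Symbol.terminal := by
  rw [inputSlice, ← List.map_append]
  congr 1
  nth_rw 2 [← List.take_append_drop i (w.take j)]
  rw [List.take_take, min_eq_left hij]

theorem inputSlice_append (hik : i ≤ k) (hkj : k ≤ j) :
    inputSlice (N := N) w i k ++ inputSlice w k j = inputSlice w i j := by
  apply List.append_cancel_left (as := (w.take i).map Symbol.terminal)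
  rw [← List.append_assoc, take_append_inputSlice hik, take_append_inputSlice hkj,
    take_append_inputSlice (hik.trans hkj)]

theorem inputSlice_succ {a : T} (hij : i ≤ j) (ha : w[j]? = some a) :
    inputSlice (N := N) w i (j + 1) = inputSlice w i j ++ [Symbol.terminal a] := by
  have hj : j < w.length := (List.getElem?_eq_some_iff.mp ha).1
  rw [← inputSlice_append hij j.le_succ]
  simp [inputSlice, List.take_add_one, ha, hj.le]

end InputSlice

namespace Earley

variable {g : CFG T N} {w : List T} {A : N} {α β : List (Symbol T N)} {i j : ℕ}

theorem le (h : Earley g w A α β i j) : i ≤ j := by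
  induction h with
  | init => rfl
  | predict => rfl
  | scan _ _ ih => exact Nat.le_succ_of_le ih
  | complete _ _ _ ih₁ ih₂ => exact ih₁.trans ih₂

theorem mem_rules (h : Earley g w A α β i j) : (A, α ++ β) ∈ g.rules := by
  induction h with
  | init hr => exact hr
  | predict _ hr => exact hr
  | scan _ _ ih => simpa using ih
  | complete _ _ _ ih => simpa using ih

theorem derives_inputSlice (h : Earley g w A α β i j) : g.Derives α (inputSlice w i j) := by
  induction h with
  | init | predict => rw [inputSlice_self]; exact .refl
  | scan hprem ha ih =>
    rw [inputSlice_succ hprem.le ha]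
    exact CFG.derives_append ih .refl
  | complete hA hB hr ih₁ ih₂ =>
    rw [← inputSlice_append hA.le hB.le]
    exact CFG.derives_append ih₁ ((CFG.derives_of_mem_rules hr).trans ih₂)

theorem derives_left_context (h : Earley g w A α β i j) :
    ∃ γ, g.Derives [Symbol.nonterminal g.initial]
      ((w.take i).map Symbol.terminal ++ Symbol.nonterminal A :: γ) := by
  induction h with
  | init => exact ⟨[], .refl⟩
  | @predict B α A β i j _ hprem _ ih =>
    obtain ⟨δ, hδ⟩ := ih
    refine ⟨β ++ δ, hδ.trans ?_⟩
    have hB : g.Derives [Symbol.nonterminal B] (inputSlice w i j ++ Symbol.nonterminal A :: β) :=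
      (CFG.derives_of_mem_rules hprem.mem_rules).trans
        (CFG.derives_append_right hprem.derives_inputSlice _)
    have := CFG.derives_append_left (CFG.derives_append_right hB δ) ((w.take i).map Symbol.terminal)
    simp only [List.append_assoc, List.cons_append] at this
    rwa [← List.append_assoc, take_append_inputSlice hprem.le] at this
  | scan _ _ ih => exact ih
  | complete _ _ _ ih => exact ih

theorem advance {μ : List (Symbol T N)} {y : List T} (hμ : g.Yields μ y)
    (hy : y <+: w.drop j) (h : Earley g w A α (μ ++ β) i j) :
    Earley g w A (α ++ μ) β i (j + y.length) := by
  induction hμ generalizing A α β i j with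
  | nil => simpa using h
  | @terminal a u z _ ih =>
    have hscan := h.scan (List.getElem?_eq_some_of_cons_prefix_drop hy)
    have hz : z <+: w.drop (j + 1) := by
      simpa using List.prefix_drop_length_of_append_prefix (x := [a]) hy
    simpa [Nat.add_right_comm, Nat.add_assoc] using ih hz hscan
  | @nonterminal B γ u x z hr _ _ ihγ ihu =>
    have hB : Earley g w B γ [] j (j + x.length) := by
      simpa using ihγ (α := []) (β := []) ((List.prefix_append x z).trans hy)
        (by simpa using h.predict hr)
    have hz : z <+: w.drop (j + x.length) := by
      simpa using List.prefix_drop_length_of_append_prefix hy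
    simpa [Nat.add_assoc] using ihu hz (h.complete hB hr)

theorem of_derives_left_context {x γ : List (Symbol T N)}
    (hS : g.Derives [Symbol.nonterminal g.initial] (x ++ Symbol.nonterminal A :: γ))
    {y : List T} (hx : g.Yields x y) (hy : y <+: w) (hr : (A, α) ∈ g.rules) :
    Earley g w A [] α y.length y.length := by
  generalize hv : x ++ Symbol.nonterminal A :: γ = v at hS
  induction hS generalizing x A γ y α with
  | refl =>
    obtain ⟨rfl, rfl⟩ : x = [] ∧ A = g.initial := by
      rcases x with _ | ⟨_, _ | _⟩ <;> simp_all
    rw [hx.eq_nil_of_nil]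
    exact .init hr
  | tail _ hstep ih =>
    obtain ⟨C, δ, p, q, hC, rfl, rfl⟩ := hstep
    rw [List.append_assoc] at hv
    rcases List.append_eq_append_cons hv.symm with ⟨p', rfl⟩ | ⟨v', rfl, hv'⟩
    · -- the step rewrote a nonterminal to the right of `A`
      exact ih (γ := p' ++ [Symbol.nonterminal C] ++ q) hx hy hr (by simp)
    rcases List.append_eq_append_cons hv' with ⟨δ₂, rfl⟩ | ⟨q₁, rfl, rfl⟩
    · -- the step introduced `A` via `C → v' A δ₂`
      obtain ⟨y₁, y₂, rfl, hy₁, hy₂⟩ := hx.of_append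
      have hCi : Earley g w C [] (v' ++ Symbol.nonterminal A :: δ₂) y₁.length y₁.length :=
        ih (γ := q) hy₁ ((List.prefix_append y₁ y₂).trans hy) hC (by simp)
      have hCj := advance hy₂ (by simpa using List.prefix_drop_length_of_append_prefix hy)
        (by simpa using hCi)
      simpa using hCj.predict hr
    · -- the step rewrote a nonterminal to the left of `A`
      exact ih (x := p ++ [Symbol.nonterminal C] ++ q₁) (γ := γ)
        (hx.of_produces ⟨C, δ, p, q₁, hC, by simp, by simp⟩) hy hr (by simp)

end Earley

/-- a dotted item [A → α • β] is inserted in E_{i,j} iff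
(A1) S ⇒* a_1⋯a_i A γ for some γ, and (A2) α ⇒* a_{i+1}⋯a_j. -/
theorem earley_item_characterization (g : CFG T N) (w : List T) (A : N)
    (α β : List (Symbol T N)) (i j : ℕ) (hr : (A, α ++ β) ∈ g.rules)
    (hij : i ≤ j) (hj : j ≤ w.length) :
    Earley g w A α β i j ↔
      ((∃ γ, g.Derives [Symbol.nonterminal g.initial]
          ((w.take i).map Symbol.terminal ++ Symbol.nonterminal A :: γ)) ∧
        g.Derives α (inputSlice w i j)) := by
  refine ⟨fun h => ⟨h.derives_left_context, h.derives_inputSlice⟩, ?_⟩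
  rintro ⟨⟨γ, hS⟩, hα⟩
  have hpredicted : Earley g w A [] (α ++ β) i i := by
    simpa [hij.trans hj] using
      Earley.of_derives_left_context hS (CFG.Yields.map_terminal _) (List.take_prefix i w) hr
  have hslice : (w.take j).drop i <+: w.drop i := by
    rw [List.drop_take]
    exact List.take_prefix _ _
  simpa [hj, hij] using Earley.advance (CFG.Yields.of_derives hα) hslice hpredicted
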